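/- Let M and N be smooth manifolds, 𝒱 ⊆ ℂTM an elliptic structure on M and 𝒲 ⊆ ℂTN a complex structure on N, and f : M → N a smooth map with f_*(𝒱_x) = 𝒲_{f(x)} for all x ∈ M. Then for every y ∈ N there is an open neighborhood U of y and a smooth map σ : U → M with f ∘ σ = id_U and σ_*(𝒲_x) ⊆ 𝒱_{σ(x)} for all x ∈ U. -/

import Mathlib

open TensorProduct Manifold

/-- Conjugation on the complexification `ℂ ⊗[ℝ] X` of a real vector space. -/
noncomputable def conjC (X : Type*) [AddCommGroup X] [Module ℝ X] :
    (ℂ ⊗[ℝ] X) →ₗ[ℝ] ℂ ⊗[ℝ] X :=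
  TensorProduct.map Complex.conjAe.toLinearMap LinearMap.id

/-- The standard elliptic structure on `ℂ^ν × ℝ^k`, inside the complexified
tangent space: the span of `∂/∂z̄_1,…,∂/∂z̄_ν, ∂/∂t_1,…,∂/∂t_k`. -/
noncomputable def Vstd (ν k : ℕ) :
    Submodule ℂ (ℂ ⊗[ℝ] ((Fin ν → ℂ) × (Fin k → ℝ))) :=
  Submodule.span ℂ
    ((Set.range fun j : Fin ν =>
        (1 : ℂ) ⊗ₜ[ℝ] (((Pi.single j 1 : Fin ν → ℂ), (0 : Fin k → ℝ))) +
          Complex.I •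
            ((1 : ℂ) ⊗ₜ[ℝ] (((Pi.single j Complex.I : Fin ν → ℂ), (0 : Fin k → ℝ))))) ∪
      (Set.range fun l : Fin k =>
        (1 : ℂ) ⊗ₜ[ℝ] (((0 : Fin ν → ℂ), (Pi.single l 1 : Fin k → ℝ)))))

/-- The standard complex structure on `ℂ^ν`: the span of `∂/∂w̄_1,…,∂/∂w̄_ν`. -/
noncomputable def Wstd (ν : ℕ) : Submodule ℂ (ℂ ⊗[ℝ] (Fin ν → ℂ)) :=
  Submodule.span ℂ (Set.range fun j : Fin ν =>
    (1 : ℂ) ⊗ₜ[ℝ] (Pi.single j 1 : Fin ν → ℂ) +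
      Complex.I • ((1 : ℂ) ⊗ₜ[ℝ] (Pi.single j Complex.I : Fin ν → ℂ)))

/-!
In charts, `f` becomes a map `G : ℂ^ν × ℝ^k → ℂ^ν` whose complexified differential carries `Vstd`
onto `Wstd`. As `Wstd` is the space of `(0,1)`-vectors `1 ⊗ v + i ⊗ (i • v)`, such a differential
kills the `∂/∂t` directions and is `ℂ`-linear and onto in the `z` directions, so the
endomorphism `∂_z G` of `ℂ^ν` is invertible. Freezing `t = t₀`, the inverse function theorem inverts `z ↦ G (z, t₀)`, and
`w ↦ (G (·, t₀)⁻¹ w, t₀)` is a local section in charts. Its differential is `(∂_z G)⁻¹`, which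
preserves `Wstd`, followed by the inclusion of the `z` directions, which maps `Wstd` into `Vstd`.
-/

lemma map_baseChange_eq_of_leftInverse {E F : Type*} [AddCommGroup E] [Module ℝ E]
    [AddCommGroup F] [Module ℝ F] {A : E →ₗ[ℝ] F} {B : F →ₗ[ℝ] E} (hBA : B ∘ₗ A = LinearMap.id)
    {P : Submodule ℂ (ℂ ⊗[ℝ] E)} {Q : Submodule ℂ (ℂ ⊗[ℝ] F)}
    (h : P.map (A.baseChange ℂ) = Q) : Q.map (B.baseChange ℂ) = P := by
  rw [← h, ← Submodule.map_comp, ← LinearMap.baseChange_comp, hBA, LinearMap.baseChange_id,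
    Submodule.map_id]

lemma map_baseChange_comp_eq {E F G : Type*} [AddCommGroup E] [Module ℝ E]
    [AddCommGroup F] [Module ℝ F] [AddCommGroup G] [Module ℝ G] {A : E →ₗ[ℝ] F} {B : F →ₗ[ℝ] G}
    {P : Submodule ℂ (ℂ ⊗[ℝ] E)} {Q : Submodule ℂ (ℂ ⊗[ℝ] F)} {R : Submodule ℂ (ℂ ⊗[ℝ] G)}
    (hA : P.map (A.baseChange ℂ) = Q) (hB : Q.map (B.baseChange ℂ) = R) :
    P.map ((B ∘ₗ A).baseChange ℂ) = R := by
  rw [LinearMap.baseChange_comp, Submodule.map_comp, hA, hB]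

lemma map_baseChange_comp_le {E F G : Type*} [AddCommGroup E] [Module ℝ E]
    [AddCommGroup F] [Module ℝ F] [AddCommGroup G] [Module ℝ G] {A : E →ₗ[ℝ] F} {B : F →ₗ[ℝ] G}
    {P : Submodule ℂ (ℂ ⊗[ℝ] E)} {Q : Submodule ℂ (ℂ ⊗[ℝ] F)} {R : Submodule ℂ (ℂ ⊗[ℝ] G)}
    (hA : P.map (A.baseChange ℂ) ≤ Q) (hB : Q.map (B.baseChange ℂ) ≤ R) :
    P.map ((B ∘ₗ A).baseChange ℂ) ≤ R := by
  rw [LinearMap.baseChange_comp, Submodule.map_comp]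
  exact (Submodule.map_mono hA).trans hB

section AntiHol

open Complex

variable {E F : Type*} [AddCommGroup E] [Module ℝ E] [Module ℂ E] [IsScalarTower ℝ ℂ E]
  [AddCommGroup F] [Module ℝ F] [Module ℂ F] [IsScalarTower ℝ ℂ F]

-- `antiHol (Pi.single j 1) = 2 ∂/∂z̄_j`; the range of `antiHol` is the `(0,1)`-part of `ℂ ⊗ E`.
noncomputable def antiHol : E →ₛₗ[starRingEnd ℂ] ℂ ⊗[ℝ] E where
  toFun v := 1 ⊗ₜ v + I • (1 ⊗ₜ (I • v))
  map_add' v w := by simp only [smul_add, tmul_add]; abel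
  map_smul' c v := by
    have hc : c • v = c.re • v + c.im • I • v := by
      rw [RCLike.real_smul_eq_coe_smul (K := ℂ), RCLike.real_smul_eq_coe_smul (K := ℂ), smul_smul,
        ← add_smul]
      congr 1
      simp
    have hconj : starRingEnd ℂ c = c.re - c.im * I := by simp [Complex.ext_iff]
    rw [hc, hconj, smul_add, smul_comm I c.re v, smul_comm I c.im (I • v), smul_smul I I, I_mul_I,
      neg_one_smul]
    simp only [tmul_add, tmul_smul, tmul_neg, smul_add, smul_neg]
    simp only [RCLike.real_smul_eq_coe_smul (K := ℂ), Complex.coe_algebraMap, smul_smul]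
    match_scalars <;> ring_nf; simp only [I_sq]; ring

@[simp] lemma antiHol_apply (v : E) : antiHol v = 1 ⊗ₜ v + I • (1 ⊗ₜ[ℝ] (I • v)) := rfl

noncomputable def holProj : ℂ ⊗[ℝ] E →ₗ[ℂ] E := LinearMap.id.liftBaseChange ℂ

@[simp] lemma holProj_tmul (c : ℂ) (v : E) : holProj (c ⊗ₜ v) = c • v := rfl

lemma holProj_antiHol (v : E) : holProj (antiHol v) = 0 := by
  simp [smul_smul]

lemma holProj_conjC_antiHol (v : E) : holProj (conjC E (antiHol v)) = (2 : ℂ) • v := by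
  simp [conjC, smul_tmul', smul_smul, two_smul]

lemma antiHol_injective : Function.Injective (antiHol : E → ℂ ⊗[ℝ] E) := by
  intro v w h
  have h2 := congrArg (fun x => holProj (conjC E x)) h
  simp only [holProj_conjC_antiHol] at h2
  exact smul_right_injective E two_ne_zero h2

variable (E) in
noncomputable def antiHolSubmodule : Submodule ℂ (ℂ ⊗[ℝ] E) := LinearMap.range antiHol

lemma antiHol_mem_antiHolSubmodule (v : E) : antiHol v ∈ antiHolSubmodule E :=
  LinearMap.mem_range_self _ v

lemma antiHolSubmodule_le_ker_holProj : antiHolSubmodule E ≤ LinearMap.ker holProj := by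
  rintro _ ⟨v, rfl⟩
  exact holProj_antiHol v

lemma eq_zero_of_one_tmul_mem_antiHolSubmodule {u : E} (h : 1 ⊗ₜ u ∈ antiHolSubmodule E) :
    u = 0 := by
  simpa using antiHolSubmodule_le_ker_holProj h

lemma map_I_smul_of_map_antiHolSubmodule_le {T : E →ₗ[ℝ] F}
    (h : (antiHolSubmodule E).map (T.baseChange ℂ) ≤ antiHolSubmodule F) (v : E) :
    T (I • v) = I • T v := by
  have hv := antiHolSubmodule_le_ker_holProj (h ⟨_, antiHol_mem_antiHolSubmodule v, rfl⟩)
  replace hv : T v + I • T (I • v) = 0 := by simpa using hv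
  have hIv := congrArg (I • ·) hv
  simp only [smul_add, smul_smul, I_mul_I, neg_one_smul, smul_zero] at hIv
  exact (add_neg_eq_zero.mp hIv).symm

lemma baseChange_antiHol_of_map_antiHolSubmodule_le {T : E →ₗ[ℝ] F}
    (h : (antiHolSubmodule E).map (T.baseChange ℂ) ≤ antiHolSubmodule F) (v : E) :
    T.baseChange ℂ (antiHol v) = antiHol (T v) := by
  simp [map_I_smul_of_map_antiHolSubmodule_le h]

lemma surjective_of_map_antiHolSubmodule_eq {T : E →ₗ[ℝ] F}
    (h : (antiHolSubmodule E).map (T.baseChange ℂ) = antiHolSubmodule F) :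
    Function.Surjective T := by
  intro w
  obtain ⟨_, ⟨v, rfl⟩, hv⟩ := h.ge (antiHol_mem_antiHolSubmodule w)
  exact ⟨v, antiHol_injective (by rw [← hv, baseChange_antiHol_of_map_antiHolSubmodule_le h.le])⟩

end AntiHol

section StandardModels

open Complex

variable {ν k : ℕ}

lemma antiHol_single (j : Fin ν) :
    antiHol (Pi.single j 1 : Fin ν → ℂ) =
      1 ⊗ₜ[ℝ] (Pi.single j 1 : Fin ν → ℂ) + I • (1 ⊗ₜ[ℝ] (Pi.single j I : Fin ν → ℂ)) := by
  rw [antiHol_apply, ← Pi.single_smul, smul_eq_mul, mul_one]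

lemma Wstd_eq_antiHolSubmodule : Wstd ν = antiHolSubmodule (Fin ν → ℂ) := by
  have hspan : Submodule.span ℂ (Set.range fun j : Fin ν => (Pi.single j 1 : Fin ν → ℂ)) = ⊤ := by
    rw [← (Pi.basisFun ℂ (Fin ν)).span_eq, ← funext (Pi.basisFun_apply ℂ (Fin ν))]
  rw [Wstd, antiHolSubmodule, ← Submodule.map_top, ← hspan, Submodule.map_span, ← Set.range_comp]
  simp only [Function.comp_def, antiHol_single]

lemma map_inl_Wstd_le_Vstd :
    (Wstd ν).map ((LinearMap.inl ℝ (Fin ν → ℂ) (Fin k → ℝ)).baseChange ℂ) ≤ Vstd ν k := by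
  rw [Wstd, Submodule.map_span, Submodule.span_le]
  rintro _ ⟨_, ⟨j, rfl⟩, rfl⟩
  exact Submodule.subset_span (Or.inl ⟨j, by simp⟩)

lemma map_comp_inl_Wstd_eq {F : Type*} [AddCommGroup F] [Module ℝ F] [Module ℂ F]
    [IsScalarTower ℝ ℂ F] {T : (Fin ν → ℂ) × (Fin k → ℝ) →ₗ[ℝ] F}
    (h : (Vstd ν k).map (T.baseChange ℂ) = antiHolSubmodule F) :
    (Wstd ν).map ((T ∘ₗ LinearMap.inl ℝ _ _).baseChange ℂ) = antiHolSubmodule F := by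
  refine le_antisymm ?_ ?_
  · rw [LinearMap.baseChange_comp, Submodule.map_comp, ← h]
    exact Submodule.map_mono map_inl_Wstd_le_Vstd
  · rw [← h, Vstd, Submodule.map_span, Submodule.span_le]
    rintro _ ⟨_, ⟨j, rfl⟩ | ⟨l, rfl⟩, rfl⟩
    · exact ⟨_, Submodule.subset_span ⟨j, rfl⟩, by simp⟩
    · have hl : T (0, Pi.single l 1) = 0 := by
        refine eq_zero_of_one_tmul_mem_antiHolSubmodule (h ▸ ?_)
        exact ⟨_, Submodule.subset_span (Or.inr ⟨l, rfl⟩), LinearMap.baseChange_tmul _ _ _⟩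
      simp only [LinearMap.baseChange_tmul, hl, tmul_zero]
      exact zero_mem _

lemma exists_equiv_of_map_Vstd_eq {T : (Fin ν → ℂ) × (Fin k → ℝ) →L[ℝ] (Fin ν → ℂ)}
    (h : (Vstd ν k).map (T.toLinearMap.baseChange ℂ) = Wstd ν) :
    ∃ A : (Fin ν → ℂ) ≃L[ℝ] (Fin ν → ℂ),
      (A : (Fin ν → ℂ) →L[ℝ] (Fin ν → ℂ)) = T.comp (ContinuousLinearMap.inl ℝ _ _) ∧
      (Wstd ν).map ((A.symm : (Fin ν → ℂ) →L[ℝ] (Fin ν → ℂ)).toLinearMap.baseChange ℂ) =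
        Wstd ν := by
  rw [Wstd_eq_antiHolSubmodule] at h ⊢
  have hT := map_comp_inl_Wstd_eq h
  rw [Wstd_eq_antiHolSubmodule] at hT
  have hsurj := surjective_of_map_antiHolSubmodule_eq hT
  let A := (LinearEquiv.ofBijective _
    ⟨LinearMap.injective_iff_surjective.mpr hsurj, hsurj⟩).toContinuousLinearEquiv
  refine ⟨A, rfl, map_baseChange_eq_of_leftInverse ?_ hT⟩
  exact LinearMap.ext A.symm_apply_apply

lemma exists_partial_fderiv_equiv {G : (Fin ν → ℂ) × (Fin k → ℝ) → (Fin ν → ℂ)}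
    {L : (Fin ν → ℂ) × (Fin k → ℝ) →L[ℝ] (Fin ν → ℂ)} {p : (Fin ν → ℂ) × (Fin k → ℝ)}
    (hG : HasFDerivAt G L p) (hL : (Vstd ν k).map (L.toLinearMap.baseChange ℂ) = Wstd ν) :
    ∃ A : (Fin ν → ℂ) ≃L[ℝ] (Fin ν → ℂ),
      HasFDerivAt (fun z => G (z, p.2)) (A : (Fin ν → ℂ) →L[ℝ] (Fin ν → ℂ)) p.1 ∧
      (Wstd ν).map ((A.symm : (Fin ν → ℂ) →L[ℝ] (Fin ν → ℂ)).toLinearMap.baseChange ℂ) =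
        Wstd ν := by
  obtain ⟨A, hA, hAW⟩ := exists_equiv_of_map_Vstd_eq hL
  have hslice := HasFDerivAt.comp (x := p.1) (g := G) hG (hasFDerivAt_prodMk_left (𝕜 := ℝ) p.1 p.2)
  exact ⟨A, hA ▸ hslice, hAW⟩

end StandardModels

section Charts

variable {H H' : Type*} [NormedAddCommGroup H] [NormedSpace ℝ H]
  [NormedAddCommGroup H'] [NormedSpace ℝ H']
  {M N : Type*} [TopologicalSpace M] [ChartedSpace H M] [TopologicalSpace N] [ChartedSpace H' N]

lemma mfderiv_symm_comp_mfderiv {e : OpenPartialHomeomorph M H}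
    (he : MDifferentiableOn 𝓘(ℝ, H) 𝓘(ℝ, H) e e.source)
    (he_symm : MDifferentiableOn 𝓘(ℝ, H) 𝓘(ℝ, H) e.symm e.target) {x : M} (hx : x ∈ e.source) :
    (mfderiv 𝓘(ℝ, H) 𝓘(ℝ, H) e.symm (e x)).comp (mfderiv 𝓘(ℝ, H) 𝓘(ℝ, H) e x) =
      ContinuousLinearMap.id ℝ H := by
  have hid : (e.symm ∘ e) =ᶠ[nhds x] id :=
    Filter.eventuallyEq_of_mem (e.open_source.mem_nhds hx) fun _ => e.left_inv
  rw [← mfderiv_comp x (he_symm.mdifferentiableAt (e.open_target.mem_nhds (e.map_source hx)))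
    (he.mdifferentiableAt (e.open_source.mem_nhds hx)), hid.mfderiv_eq, mfderiv_id]
  rfl

lemma map_mfderiv_symm_eq {e : OpenPartialHomeomorph M H}
    (he : MDifferentiableOn 𝓘(ℝ, H) 𝓘(ℝ, H) e e.source)
    (he_symm : MDifferentiableOn 𝓘(ℝ, H) 𝓘(ℝ, H) e.symm e.target)
    {V : M → Submodule ℂ (ℂ ⊗[ℝ] H)} {P₀ : Submodule ℂ (ℂ ⊗[ℝ] H)}
    (hV : ∀ x ∈ e.source, (V x).map ((mfderiv 𝓘(ℝ, H) 𝓘(ℝ, H) e x).toLinearMap.baseChange ℂ) = P₀)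
    {p : H} (hp : p ∈ e.target) :
    P₀.map ((mfderiv 𝓘(ℝ, H) 𝓘(ℝ, H) e.symm p).toLinearMap.baseChange ℂ) = V (e.symm p) := by
  have h := mfderiv_symm_comp_mfderiv he he_symm (e.map_target hp)
  rw [e.right_inv hp] at h
  exact map_baseChange_eq_of_leftInverse (congrArg ContinuousLinearMap.toLinearMap h)
    (hV _ (e.map_target hp))

lemma exists_hasFDerivAt_writtenInCharts_map_eq {eM : OpenPartialHomeomorph M H}
    {eN : OpenPartialHomeomorph N H'}
    {f : M → N} (heM : MDifferentiableOn 𝓘(ℝ, H) 𝓘(ℝ, H) eM eM.source)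
    (heM_symm : MDifferentiableOn 𝓘(ℝ, H) 𝓘(ℝ, H) eM.symm eM.target)
    (heN : MDifferentiableOn 𝓘(ℝ, H') 𝓘(ℝ, H') eN eN.source)
    (hf : MDifferentiable 𝓘(ℝ, H) 𝓘(ℝ, H') f)
    {V : M → Submodule ℂ (ℂ ⊗[ℝ] H)} {W : N → Submodule ℂ (ℂ ⊗[ℝ] H')}
    {P₀ : Submodule ℂ (ℂ ⊗[ℝ] H)} {Q₀ : Submodule ℂ (ℂ ⊗[ℝ] H')}
    (hV : ∀ x ∈ eM.source,
      (V x).map ((mfderiv 𝓘(ℝ, H) 𝓘(ℝ, H) eM x).toLinearMap.baseChange ℂ) = P₀)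
    (hW : ∀ y ∈ eN.source,
      (W y).map ((mfderiv 𝓘(ℝ, H') 𝓘(ℝ, H') eN y).toLinearMap.baseChange ℂ) = Q₀)
    (hfVW : ∀ x, (V x).map ((mfderiv 𝓘(ℝ, H) 𝓘(ℝ, H') f x).toLinearMap.baseChange ℂ) = W (f x))
    {p : H} (hp : p ∈ eM.target) (hfp : f (eM.symm p) ∈ eN.source) :
    ∃ L : H →L[ℝ] H', HasFDerivAt (eN ∘ f ∘ eM.symm) L p ∧
      P₀.map (L.toLinearMap.baseChange ℂ) = Q₀ := by
  have hG : HasMFDerivAt 𝓘(ℝ, H) 𝓘(ℝ, H') (eN ∘ f ∘ eM.symm) p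
      ((mfderiv 𝓘(ℝ, H') 𝓘(ℝ, H') eN (f (eM.symm p))).comp
        ((mfderiv 𝓘(ℝ, H) 𝓘(ℝ, H') f (eM.symm p)).comp (mfderiv 𝓘(ℝ, H) 𝓘(ℝ, H) eM.symm p))) :=
    (heN.mdifferentiableAt (eN.open_source.mem_nhds hfp)).hasMFDerivAt.comp p
      ((hf _).hasMFDerivAt.comp p
        (heM_symm.mdifferentiableAt (eM.open_target.mem_nhds hp)).hasMFDerivAt)
  refine ⟨_, hG.hasFDerivAt, ?_⟩
  exact map_baseChange_comp_eq (map_baseChange_comp_eq (map_mfderiv_symm_eq heM heM_symm hV hp)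
    (hfVW _)) (hW _ hfp)

end Charts

section InverseFunction

variable {E F E' : Type*} [NormedAddCommGroup E] [NormedSpace ℝ E] [CompleteSpace E]
  [NormedAddCommGroup F] [NormedSpace ℝ F] [NormedAddCommGroup E'] [NormedSpace ℝ E']
  {n : WithTop ℕ∞}

lemma exists_openPartialHomeomorph_contDiffOn_symm {g : E → E'} {S : Set E} (hS : IsOpen S)
    (hg : ContDiffOn ℝ n g S) (hn : n ≠ 0)
    (hg' : ∀ z ∈ S, ∃ A : E ≃L[ℝ] E', HasFDerivAt g (A : E →L[ℝ] E') z) {z₀ : E} (hz₀ : z₀ ∈ S) :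
    ∃ Φ : OpenPartialHomeomorph E E', ⇑Φ = g ∧ z₀ ∈ Φ.source ∧ Φ.source ⊆ S ∧
      ContDiffOn ℝ n Φ.symm Φ.target := by
  obtain ⟨A, hA⟩ := hg' z₀ hz₀
  have hgz₀ := hg.contDiffAt (hS.mem_nhds hz₀)
  let Φ := (hgz₀.toOpenPartialHomeomorph g hA hn).restrOpen S hS
  refine ⟨Φ, rfl, ⟨hgz₀.mem_toOpenPartialHomeomorph_source hA hn, hz₀⟩, Set.inter_subset_right,
    fun w hw => ?_⟩
  have hwS : Φ.symm w ∈ S := (Φ.map_target hw).2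
  obtain ⟨B, hB⟩ := hg' _ hwS
  exact (Φ.contDiffAt_symm hw hB (hg.contDiffAt (hS.mem_nhds hwS))).contDiffWithinAt

variable {M N : Type*} [TopologicalSpace M] [ChartedSpace (E × F) M]
  [TopologicalSpace N] [ChartedSpace E' N]

theorem exists_local_section_of_partial_fderiv (hn : n ≠ 0) {f : M → N}
    (hf : ContMDiff 𝓘(ℝ, E × F) 𝓘(ℝ, E') n f)
    {eM : OpenPartialHomeomorph M (E × F)} {eN : OpenPartialHomeomorph N E'}
    (heM_symm : ContMDiffOn 𝓘(ℝ, E × F) 𝓘(ℝ, E × F) n eM.symm eM.target)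
    (heN : ContMDiffOn 𝓘(ℝ, E') 𝓘(ℝ, E') n eN eN.source)
    (hpartial : ∀ p ∈ eM.target, f (eM.symm p) ∈ eN.source →
      ∃ A : E ≃L[ℝ] E', HasFDerivAt (fun z => eN (f (eM.symm (z, p.2)))) (A : E →L[ℝ] E') p.1)
    {x₀ : M} (hx₀ : x₀ ∈ eM.source) (hfx₀ : f x₀ ∈ eN.source) :
    ∃ U : Set N, ∃ σ : N → M, IsOpen U ∧ U ⊆ eN.source ∧ f x₀ ∈ U ∧
      ContMDiffOn 𝓘(ℝ, E') 𝓘(ℝ, E × F) n σ U ∧ (∀ u ∈ U, f (σ u) = u) ∧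
      ∀ u ∈ U, ∃ p ∈ eM.target, f (eM.symm p) ∈ eN.source ∧ σ u = eM.symm p ∧
        ∀ A : E ≃L[ℝ] E', HasFDerivAt (fun z => eN (f (eM.symm (z, p.2)))) (A : E →L[ℝ] E') p.1 →
          mfderiv 𝓘(ℝ, E') 𝓘(ℝ, E × F) σ u =
            (mfderiv 𝓘(ℝ, E × F) 𝓘(ℝ, E × F) eM.symm p).comp ((ContinuousLinearMap.inl ℝ E F).comp
              ((A.symm : E' →L[ℝ] E).comp (mfderiv 𝓘(ℝ, E') 𝓘(ℝ, E') eN u))) := by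
  set t₀ := (eM x₀).2
  set S : Set E := {z | (z, t₀) ∈ eM.target ∧ f (eM.symm (z, t₀)) ∈ eN.source}
  have hS : IsOpen S := by
    have hD := (hf.continuous.comp_continuousOn eM.continuousOn_symm).isOpen_inter_preimage
      eM.open_target eN.open_source
    exact hD.preimage (by fun_prop)
  have hg : ContDiffOn ℝ n (fun z => eN (f (eM.symm (z, t₀)))) S := by
    have hslice : ContMDiffOn 𝓘(ℝ, E) 𝓘(ℝ, E × F) n (fun z => (z, t₀)) S :=
      (contDiff_id.prodMk contDiff_const).contMDiff.contMDiffOn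
    exact (heN.comp (hf.comp_contMDiffOn (heM_symm.comp hslice fun _ hz => hz.1))
      fun _ hz => hz.2).contDiffOn
  have hz₀ : (eM x₀).1 ∈ S := by
    simp only [S, t₀, Set.mem_ofPred_eq, Prod.mk.eta, eM.left_inv hx₀]
    exact ⟨eM.map_source hx₀, hfx₀⟩
  obtain ⟨Φ, hΦ, hz₀Φ, hΦS, hΦsymm⟩ := exists_openPartialHomeomorph_contDiffOn_symm hS hg hn
    (fun z hz => hpartial _ hz.1 hz.2) hz₀
  have hΦS' : ∀ w ∈ Φ.target, Φ.symm w ∈ S := fun w hw => hΦS (Φ.map_target hw)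
  refine ⟨eN.source ∩ eN ⁻¹' Φ.target, fun u => eM.symm (Φ.symm (eN u), t₀),
    heN.continuousOn.isOpen_inter_preimage eN.open_source Φ.open_target, Set.inter_subset_left,
    ⟨hfx₀, ?_⟩, ?_, ?_, ?_⟩
  · have h : Φ (eM x₀).1 = eN (f x₀) := by simp [hΦ, t₀, eM.left_inv hx₀]
    exact (h ▸ Φ.map_source hz₀Φ : eN (f x₀) ∈ Φ.target)
  · have hψ : ContMDiffOn 𝓘(ℝ, E') 𝓘(ℝ, E × F) n (fun w => (Φ.symm w, t₀)) Φ.target :=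
      (hΦsymm.prodMk contDiffOn_const).contMDiffOn
    exact heM_symm.comp (hψ.comp (heN.mono Set.inter_subset_left) fun _ hu => hu.2)
      fun _ hu => (hΦS' _ hu.2).1
  · rintro u ⟨hu, hΦu⟩
    refine eN.injOn (hΦS' _ hΦu).2 hu ?_
    simpa [hΦ] using Φ.right_inv hΦu
  · rintro u ⟨hu, hΦu⟩
    refine ⟨(Φ.symm (eN u), t₀), (hΦS' _ hΦu).1, (hΦS' _ hΦu).2, rfl, fun A hA => ?_⟩
    have hsymm : HasFDerivAt Φ.symm (A.symm : E' →L[ℝ] E) (eN u) :=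
      Φ.hasFDerivAt_symm hΦu (hΦ ▸ hA)
    have hψ : HasMFDerivAt 𝓘(ℝ, E') 𝓘(ℝ, E × F) (fun w => (Φ.symm w, t₀)) (eN u)
        ((ContinuousLinearMap.inl ℝ E F).comp (A.symm : E' →L[ℝ] E)) :=
      ((hasFDerivAt_prodMk_left _ t₀).comp (eN u) hsymm).hasMFDerivAt
    exact (((heM_symm.mdifferentiableOn hn).mdifferentiableAt
      (eM.open_target.mem_nhds (hΦS' _ hΦu).1)).hasMFDerivAt.comp u (hψ.comp u
        ((heN.mdifferentiableOn hn).mdifferentiableAt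
          (eN.open_source.mem_nhds hu)).hasMFDerivAt)).mfderiv

end InverseFunction

theorem stmt16_general {ν k : ℕ}
    {M : Type*} [TopologicalSpace M] [ChartedSpace ((Fin ν → ℂ) × (Fin k → ℝ)) M]
    {N : Type*} [TopologicalSpace N] [ChartedSpace (Fin ν → ℂ) N]
    (V : M → Submodule ℂ (ℂ ⊗[ℝ] ((Fin ν → ℂ) × (Fin k → ℝ))))
    (W : N → Submodule ℂ (ℂ ⊗[ℝ] (Fin ν → ℂ)))
    (hVchart : ∀ x : M, ∃ e : OpenPartialHomeomorph M ((Fin ν → ℂ) × (Fin k → ℝ)),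
      x ∈ e.source ∧
        ContMDiffOn 𝓘(ℝ, (Fin ν → ℂ) × (Fin k → ℝ)) 𝓘(ℝ, (Fin ν → ℂ) × (Fin k → ℝ)) (⊤ : ℕ∞)
          (⇑e) e.source ∧
        ContMDiffOn 𝓘(ℝ, (Fin ν → ℂ) × (Fin k → ℝ)) 𝓘(ℝ, (Fin ν → ℂ) × (Fin k → ℝ)) (⊤ : ℕ∞)
          (⇑e.symm) e.target ∧
        ∀ y ∈ e.source,
          Submodule.map
            (((mfderiv 𝓘(ℝ, (Fin ν → ℂ) × (Fin k → ℝ))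
                𝓘(ℝ, (Fin ν → ℂ) × (Fin k → ℝ)) (⇑e) y).toLinearMap).baseChange ℂ)
            (V y) = Vstd ν k)
    (hWchart : ∀ y : N, ∃ e : OpenPartialHomeomorph N (Fin ν → ℂ),
      y ∈ e.source ∧
        ContMDiffOn 𝓘(ℝ, Fin ν → ℂ) 𝓘(ℝ, Fin ν → ℂ) (⊤ : ℕ∞) (⇑e) e.source ∧
        ContMDiffOn 𝓘(ℝ, Fin ν → ℂ) 𝓘(ℝ, Fin ν → ℂ) (⊤ : ℕ∞) (⇑e.symm) e.target ∧
        ∀ z ∈ e.source,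
          Submodule.map
            (((mfderiv 𝓘(ℝ, Fin ν → ℂ) 𝓘(ℝ, Fin ν → ℂ) (⇑e) z).toLinearMap).baseChange ℂ)
            (W z) = Wstd ν)
    (f : M → N)
    (hf : ContMDiff 𝓘(ℝ, (Fin ν → ℂ) × (Fin k → ℝ)) 𝓘(ℝ, Fin ν → ℂ) (⊤ : ℕ∞) f)
    (hfsurj : Function.Surjective f)
    (hfV : ∀ x : M,
      Submodule.map
        (((mfderiv 𝓘(ℝ, (Fin ν → ℂ) × (Fin k → ℝ)) 𝓘(ℝ, Fin ν → ℂ) f x).toLinearMap).baseChange ℂ)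
        (V x) = W (f x)) :
    ∀ y : N, ∃ (U : Set N) (σ : N → M), IsOpen U ∧ y ∈ U ∧
      ContMDiffOn 𝓘(ℝ, Fin ν → ℂ) 𝓘(ℝ, (Fin ν → ℂ) × (Fin k → ℝ)) (⊤ : ℕ∞) σ U ∧
      (∀ u ∈ U, f (σ u) = u) ∧
      ∀ u ∈ U,
        Submodule.map
          (((mfderiv 𝓘(ℝ, Fin ν → ℂ) 𝓘(ℝ, (Fin ν → ℂ) × (Fin k → ℝ)) σ u).toLinearMap).baseChange ℂ)
          (W u) ≤ V (σ u) := by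
  intro y
  obtain ⟨x₀, rfl⟩ := hfsurj y
  obtain ⟨eM, hx₀, heM, heM_symm, hV⟩ := hVchart x₀
  obtain ⟨eN, hfx₀, heN, -, hW⟩ := hWchart (f x₀)
  have hn : ((⊤ : ℕ∞) : WithTop ℕ∞) ≠ 0 := by simp
  have hpartial := fun p (hp : p ∈ eM.target) (hfp : f (eM.symm p) ∈ eN.source) =>
    (exists_hasFDerivAt_writtenInCharts_map_eq (heM.mdifferentiableOn hn)
      (heM_symm.mdifferentiableOn hn) (heN.mdifferentiableOn hn) (hf.mdifferentiable hn) hV hW hfV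
      hp hfp).elim
      fun _ hL => exists_partial_fderiv_equiv hL.1 hL.2
  obtain ⟨U, σ, hU, hUN, hx₀U, hσ, hfσ, hdσ⟩ := exists_local_section_of_partial_fderiv hn hf
    heM_symm heN (fun p hp hfp => (hpartial p hp hfp).imp fun _ => And.left) hx₀ hfx₀
  refine ⟨U, σ, hU, hx₀U, hσ, hfσ, fun u hu => ?_⟩
  obtain ⟨p, hp, hfp, hσu, hdσu⟩ := hdσ u hu
  obtain ⟨A, hA, hAW⟩ := hpartial p hp hfp
  rw [hdσu A hA, hσu, ← map_mfderiv_symm_eq (heM.mdifferentiableOn hn)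
    (heM_symm.mdifferentiableOn hn) hV hp]
  -- `W u → Wstd → Wstd → Vstd → V (σ u)` along `d eN`, `(∂_z G)⁻¹`, `inl` and `d eM⁻¹`
  exact map_baseChange_comp_le (map_baseChange_comp_le (map_baseChange_comp_le (hW u (hUN hu)).le
    hAW.le) map_inl_Wstd_le_Vstd) le_rfl

/-- Let `M`, `N` be smooth manifolds (modelled on
`ℂ^ν × ℝ^k` and `ℂ^ν`), `𝒱 ⊆ ℂTM` an elliptic structure and `𝒲 ⊆ ℂTN` a
complex structure (encoded as distributions of complex subspaces of the
complexified tangent spaces, locally equivalent to the standard models via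
charts — this encodes involutivity/local integrability), and `f : M → N` a
smooth surjection with `f_*(𝒱_x) = 𝒲_{f(x)}`.  Then every `y ∈ N` has an open
neighbourhood `U` and a smooth section `σ : U → M` of `f` with
`σ_*(𝒲) ⊆ 𝒱`. -/
theorem stmt16 {ν k : ℕ}
    {M : Type*} [TopologicalSpace M] [ChartedSpace ((Fin ν → ℂ) × (Fin k → ℝ)) M]
    [IsManifold 𝓘(ℝ, (Fin ν → ℂ) × (Fin k → ℝ)) ((⊤ : ℕ∞) : WithTop ℕ∞) M]
    {N : Type*} [TopologicalSpace N] [ChartedSpace (Fin ν → ℂ) N]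
    [IsManifold 𝓘(ℝ, Fin ν → ℂ) ((⊤ : ℕ∞) : WithTop ℕ∞) N]
    (V : M → Submodule ℂ (ℂ ⊗[ℝ] ((Fin ν → ℂ) × (Fin k → ℝ))))
    (W : N → Submodule ℂ (ℂ ⊗[ℝ] (Fin ν → ℂ)))
    (hVell : ∀ (x : M) (w : ℂ ⊗[ℝ] ((Fin ν → ℂ) × (Fin k → ℝ))),
      ∃ a ∈ V x, ∃ b ∈ V x, w = a + conjC _ b)
    (hWsum : ∀ (y : N) (w : ℂ ⊗[ℝ] (Fin ν → ℂ)),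
      ∃ a ∈ W y, ∃ b ∈ W y, w = a + conjC _ b)
    (hWdisj : ∀ (y : N), ∀ w ∈ W y, (∃ b ∈ W y, w = conjC _ b) → w = 0)
    (hVchart : ∀ x : M, ∃ e : OpenPartialHomeomorph M ((Fin ν → ℂ) × (Fin k → ℝ)),
      x ∈ e.source ∧
        ContMDiffOn 𝓘(ℝ, (Fin ν → ℂ) × (Fin k → ℝ)) 𝓘(ℝ, (Fin ν → ℂ) × (Fin k → ℝ)) (⊤ : ℕ∞)
          (⇑e) e.source ∧
        ContMDiffOn 𝓘(ℝ, (Fin ν → ℂ) × (Fin k → ℝ)) 𝓘(ℝ, (Fin ν → ℂ) × (Fin k → ℝ)) (⊤ : ℕ∞)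
          (⇑e.symm) e.target ∧
        ∀ y ∈ e.source,
          Submodule.map
            (((mfderiv 𝓘(ℝ, (Fin ν → ℂ) × (Fin k → ℝ))
                𝓘(ℝ, (Fin ν → ℂ) × (Fin k → ℝ)) (⇑e) y).toLinearMap).baseChange ℂ)
            (V y) = Vstd ν k)
    (hWchart : ∀ y : N, ∃ e : OpenPartialHomeomorph N (Fin ν → ℂ),
      y ∈ e.source ∧
        ContMDiffOn 𝓘(ℝ, Fin ν → ℂ) 𝓘(ℝ, Fin ν → ℂ) (⊤ : ℕ∞) (⇑e) e.source ∧
        ContMDiffOn 𝓘(ℝ, Fin ν → ℂ) 𝓘(ℝ, Fin ν → ℂ) (⊤ : ℕ∞) (⇑e.symm) e.target ∧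
        ∀ z ∈ e.source,
          Submodule.map
            (((mfderiv 𝓘(ℝ, Fin ν → ℂ) 𝓘(ℝ, Fin ν → ℂ) (⇑e) z).toLinearMap).baseChange ℂ)
            (W z) = Wstd ν)
    (f : M → N)
    (hf : ContMDiff 𝓘(ℝ, (Fin ν → ℂ) × (Fin k → ℝ)) 𝓘(ℝ, Fin ν → ℂ) (⊤ : ℕ∞) f)
    (hfsurj : Function.Surjective f)
    (hfV : ∀ x : M,
      Submodule.map
        (((mfderiv 𝓘(ℝ, (Fin ν → ℂ) × (Fin k → ℝ)) 𝓘(ℝ, Fin ν → ℂ) f x).toLinearMap).baseChange ℂ)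
        (V x) = W (f x)) :
    ∀ y : N, ∃ (U : Set N) (σ : N → M), IsOpen U ∧ y ∈ U ∧
      ContMDiffOn 𝓘(ℝ, Fin ν → ℂ) 𝓘(ℝ, (Fin ν → ℂ) × (Fin k → ℝ)) (⊤ : ℕ∞) σ U ∧
      (∀ u ∈ U, f (σ u) = u) ∧
      ∀ u ∈ U,
        Submodule.map
          (((mfderiv 𝓘(ℝ, Fin ν → ℂ) 𝓘(ℝ, (Fin ν → ℂ) × (Fin k → ℝ)) σ u).toLinearMap).baseChange ℂ)
          (W u) ≤ V (σ u) :=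
  stmt16_general V W hVchart hWchart f hf hfsurj hfV
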